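/- arXiv:0905.0064 — 5 statements merged into one kernel-verified Lean document; each statement's English description precedes it below -/
import Mathlib

section
/- If C = (C*)* and D = (D*)*, then every corner A of C and D satisfies A = (A*)*, and the same holds for every component of A. -/
variable {V : Type*}

/-- The boundary `NC` of a vertex set: vertices outside `C` adjacent to `C`. -/
def bdry (G : SimpleGraph V) (C : Set V) : Set V :=
  {v | v ∉ C ∧ ∃ u ∈ C, G.Adj u v}

/-- The `*`-complement: `C* = VX \ (C ∪ NC)`. -/
def cstar (G : SimpleGraph V) (C : Set V) : Set V :=
  (C ∪ bdry G C)ᶜ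

/-- A set of vertices is connected if its induced subgraph is connected. -/
def ConnSet (G : SimpleGraph V) (C : Set V) : Prop :=
  (G.induce C).Connected

/-- `Q` is a component of `A`: a maximal connected subset of `A`. -/
def IsCompOf (G : SimpleGraph V) (Q A : Set V) : Prop :=
  Q ⊆ A ∧ ConnSet G Q ∧ ∀ R : Set V, Q ⊆ R → R ⊆ A → ConnSet G R → R = Q

/-- `A`, `B` form a pair of opposite corners of `C` and `D`. -/
def OppCorners (G : SimpleGraph V) (C D A B : Set V) : Prop :=
  (A = C ∩ D ∧ B = cstar G C ∩ cstar G D) ∨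
  (A = cstar G C ∩ cstar G D ∧ B = C ∩ D) ∨
  (A = C ∩ cstar G D ∧ B = cstar G C ∩ D) ∨
  (A = cstar G C ∩ D ∧ B = C ∩ cstar G D)

/-- Cut system (Definition 2.1). -/
structure IsCutSystem (G : SimpleGraph V) (𝒞 : Set (Set V)) : Prop where
  nonempty : ∀ C ∈ 𝒞, C.Nonempty
  conn : ∀ C ∈ 𝒞, ConnSet G C
  finBd : ∀ C ∈ 𝒞, (bdry G C).Finite
  star_star : ∀ C ∈ 𝒞, cstar G (cstar G C) = C
  a1 : ∀ C ∈ 𝒞, ∀ D ∈ 𝒞, ∀ A B : Set V, OppCorners G C D A B →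
    (∃ E ∈ 𝒞, E ⊆ A) → (∃ E ∈ 𝒞, E ⊆ B) →
    ∀ Q : Set V, (IsCompOf G Q A ∨ IsCompOf G Q B) → (∃ E ∈ 𝒞, E ⊆ Q) → Q ∈ 𝒞
  a2 : ∀ C ∈ 𝒞, ∀ D ∈ 𝒞, ∃ A B : Set V, OppCorners G C D A B ∧
    (∃ E ∈ 𝒞, E ⊆ A) ∧ (∃ E ∈ 𝒞, E ⊆ B)

/-- A thin cut system: all cuts have boundary of the minimal cardinality `κ`. -/
structure IsThinCutSystem (G : SimpleGraph V) (𝒞 : Set (Set V)) (κ : ℕ) : Prop where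
  toIsCutSystem : IsCutSystem G 𝒞
  thin : ∀ C ∈ 𝒞, (bdry G C).ncard = κ

/-- A pre-cut: a cut or the `*`-complement of a cut. -/
def PreCut (G : SimpleGraph V) (𝒞 : Set (Set V)) (E : Set V) : Prop :=
  E ∈ 𝒞 ∨ ∃ C ∈ 𝒞, E = cstar G C

/-- `A` is an isolated corner of the pair `C`, `D`: a corner containing no cut,
whose two adjacent links are empty. -/
def IsolatedCorner (G : SimpleGraph V) (𝒞 : Set (Set V)) (C D A : Set V) : Prop :=
  (¬ ∃ E ∈ 𝒞, E ⊆ A) ∧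
  ((A = C ∩ D ∧ C ∩ bdry G D = ∅ ∧ D ∩ bdry G C = ∅) ∨
   (A = C ∩ cstar G D ∧ C ∩ bdry G D = ∅ ∧ cstar G D ∩ bdry G C = ∅) ∨
   (A = cstar G C ∩ D ∧ cstar G C ∩ bdry G D = ∅ ∧ D ∩ bdry G C = ∅) ∨
   (A = cstar G C ∩ cstar G D ∧ cstar G C ∩ bdry G D = ∅ ∧ cstar G D ∩ bdry G C = ∅))

/-- Two sets are nested if they have an isolated corner. -/
def Nested (G : SimpleGraph V) (𝒞 : Set (Set V)) (C D : Set V) : Prop :=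
  ∃ A : Set V, IsolatedCorner G 𝒞 C D A

/-- A slice: a component of the complement of a separator which is not a cut. -/
def IsSlice (G : SimpleGraph V) (𝒞 : Set (Set V)) (Q : Set V) : Prop :=
  (∃ C ∈ 𝒞, IsCompOf G Q (bdry G C)ᶜ) ∧ Q ∉ 𝒞

/-- `Y` is `k`-inseparable (Definition 2.12). -/
def Insep (G : SimpleGraph V) (k : ℕ) (Y : Set V) : Prop :=
  (Y.Infinite ∨ k + 1 ≤ Y.ncard) ∧
  ∀ C : Set V, (bdry G C).Finite → (bdry G C).ncard ≤ k →
    Y ⊆ C ∪ bdry G C ∨ Y ⊆ cstar G C ∪ bdry G C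

/-- `C` separates `Y₁` from `Y₂` (Definition 2.10, one orientation). -/
def Separates (G : SimpleGraph V) (C Y₁ Y₂ : Set V) : Prop :=
  Y₁ ⊆ C ∪ bdry G C ∧ Y₂ ⊆ cstar G C ∪ bdry G C ∧
  ¬ Y₁ ⊆ bdry G C ∧ ¬ Y₂ ⊆ bdry G C

/-- The set `S` separates the vertices `x` and `y`. -/
def SepVert (G : SimpleGraph V) (S : Set V) (x y : V) : Prop :=
  x ∉ S ∧ y ∉ S ∧ ∀ K : Set V, IsCompOf G K Sᶜ → x ∈ K → y ∉ K

/-- `S` is a tight `x`-`y`-separator. -/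
def TightSep (G : SimpleGraph V) (x y : V) (S : Set V) : Prop :=
  ∃ A B : Set V, IsCompOf G A Sᶜ ∧ IsCompOf G B Sᶜ ∧ A ≠ B ∧ x ∈ A ∧ y ∈ B ∧
    ∀ s ∈ S, (∃ a ∈ A, G.Adj s a) ∧ (∃ b ∈ B, G.Adj s b)

/-- `μ(C)`: the number of cuts of the system not nested with `C`. -/
noncomputable def mu (G : SimpleGraph V) (𝒞 : Set (Set V)) (C : Set V) : ℕ :=
  {D ∈ 𝒞 | ¬ Nested G 𝒞 C D}.ncard



lemma mem_cstar_iff (G : SimpleGraph V) (C : Set V) (v : V) :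
    v ∈ cstar G C ↔ v ∉ C ∧ v ∉ bdry G C := by
  simp [cstar, not_or]

lemma subset_cstar_cstar (G : SimpleGraph V) (C : Set V) : C ⊆ cstar G (cstar G C) := by
  intro v hv
  rw [mem_cstar_iff]
  constructor
  · rw [mem_cstar_iff]
    rintro ⟨h1, h2⟩
    exact h1 hv
  · rintro ⟨hn, u, hu, hadj⟩
    rw [mem_cstar_iff] at hu
    exact hu.2 ⟨hu.1, v, hv, hadj.symm⟩

lemma cstar_anti (G : SimpleGraph V) {C D : Set V} (h : C ⊆ D) :
    cstar G D ⊆ cstar G C := by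
  intro v hv
  rw [mem_cstar_iff] at hv ⊢
  refine ⟨fun hC => hv.1 (h hC), ?_⟩
  rintro ⟨hn, u, hu, hadj⟩
  exact hv.2 ⟨hv.1, u, h hu, hadj⟩

lemma cstar_cstar_cstar (G : SimpleGraph V) (C : Set V) :
    cstar G (cstar G (cstar G C)) = cstar G C :=
  le_antisymm (cstar_anti G (subset_cstar_cstar G C)) (subset_cstar_cstar G (cstar G C))

lemma cstar_union (G : SimpleGraph V) (U W : Set V) :
    cstar G (U ∪ W) = cstar G U ∩ cstar G W := by
  have : (U ∪ W) ∪ bdry G (U ∪ W) = (U ∪ bdry G U) ∪ (W ∪ bdry G W) := by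
    ext v
    simp only [Set.mem_union, bdry, Set.mem_setOf_eq]
    constructor
    · rintro ((h | h) | ⟨hn, u, (hu | hu), hadj⟩)
      · exact Or.inl (Or.inl h)
      · exact Or.inr (Or.inl h)
      · by_cases hU : v ∈ U
        · exact Or.inl (Or.inl hU)
        · exact Or.inl (Or.inr ⟨hU, u, hu, hadj⟩)
      · by_cases hW : v ∈ W
        · exact Or.inr (Or.inl hW)
        · exact Or.inr (Or.inr ⟨hW, u, hu, hadj⟩)
    · rintro ((h | ⟨hn, u, hu, hadj⟩) | (h | ⟨hn, u, hu, hadj⟩))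
      · exact Or.inl (Or.inl h)
      · by_cases hUW : v ∈ U ∪ W
        · exact Or.inl hUW
        · exact Or.inr ⟨hUW, u, Or.inl hu, hadj⟩
      · exact Or.inl (Or.inr h)
      · by_cases hUW : v ∈ U ∪ W
        · exact Or.inl hUW
        · exact Or.inr ⟨hUW, u, Or.inr hu, hadj⟩
  simp only [cstar]
  rw [this, Set.compl_union]

lemma corner_cstar_cstar (G : SimpleGraph V) (U W : Set V) :
    cstar G (cstar G (cstar G U ∩ cstar G W)) = cstar G U ∩ cstar G W := by
  rw [← cstar_union, cstar_cstar_cstar]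

lemma comp_cstar_cstar (G : SimpleGraph V) {Q A : Set V}
    (hAA : cstar G (cstar G A) = A) (hQ : IsCompOf G Q A) :
    cstar G (cstar G Q) = Q := by
  obtain ⟨hQA, hQc, hQmax⟩ := hQ
  refine le_antisymm ?_ (subset_cstar_cstar G Q)
  intro v hv
  have hvA : v ∈ A := by
    rw [← hAA]
    exact cstar_anti G (cstar_anti G hQA) hv
  by_contra hvQ
  -- v ∈ Q ∪ bdry Q
  have hvb : v ∈ bdry G Q := by
    rw [mem_cstar_iff] at hv
    have h1 := hv.1
    rw [mem_cstar_iff] at h1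
    push_neg at h1
    exact h1 hvQ
  obtain ⟨_, u, huQ, hadj⟩ := hvb
  have hsing : (G.induce ({v} : Set V)).Connected := by
    haveI : Nonempty ({v} : Set V) := ⟨⟨v, rfl⟩⟩
    refine ⟨fun a b => ?_⟩
    have hab : a = b := Subtype.ext (a.2.trans b.2.symm)
    exact hab ▸ SimpleGraph.Reachable.refl a
  have hconn : ConnSet G (Q ∪ {v}) :=
    SimpleGraph.connected_induce_union hQc.preconnected hsing.preconnected huQ (Set.mem_singleton v) hadj
  have := hQmax (Q ∪ {v}) Set.subset_union_left
    (Set.union_subset hQA (by simpa using hvA)) hconn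
  exact hvQ (this ▸ Set.mem_union_right Q rfl)

theorem stmt2 (G : SimpleGraph V) (C D : Set V)
    (hC : cstar G (cstar G C) = C) (hD : cstar G (cstar G D) = D)
    (A : Set V)
    (hA : A = C ∩ D ∨ A = C ∩ cstar G D ∨ A = cstar G C ∩ D ∨
      A = cstar G C ∩ cstar G D) :
    cstar G (cstar G A) = A ∧
    ∀ Q : Set V, IsCompOf G Q A → cstar G (cstar G Q) = Q := by
  obtain rfl | rfl | rfl | rfl := hA
  all_goals {
    constructor
    · first
      | (rw [← hC, ← hD]; exact corner_cstar_cstar G _ _)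
      | (rw [← hC]; exact corner_cstar_cstar G _ _)
      | (rw [← hD]; exact corner_cstar_cstar G _ _)
      | exact corner_cstar_cstar G _ _
    · intro Q hQ
      refine comp_cstar_cstar G ?_ hQ
      first
      | (rw (occs := .pos [1,2]) [← hC, ← hD]; exact corner_cstar_cstar G _ _)
      | (conv_rhs => rw [← hC]
         rw (occs := .pos [1]) [← hC]; exact corner_cstar_cstar G _ _)
      | (conv_rhs => rw [← hD]
         rw (occs := .pos [1]) [← hD]; exact corner_cstar_cstar G _ _)
      | exact corner_cstar_cstar G _ _
  }
end

section
/- Let Y be a k-inseparable set of vertices in a graph X. Then there is a unique maximal k-inseparable set containing Y. In particular, if A and B are k-inseparable sets with a common k-inseparable subset Y, then A ∪ B is k-inseparable. -/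
variable {V : Type*}

lemma sides_inter (G : SimpleGraph V) (C : Set V) :
    (C ∪ bdry G C) ∩ (cstar G C ∪ bdry G C) ⊆ bdry G C := by
  rintro x ⟨h1, h2⟩
  rcases h2 with h2 | h2
  · rcases h1 with h1 | h1
    · exact absurd (Or.inl h1) h2
    · exact h1
  · exact h2

lemma insep_not_sub_bdry {G : SimpleGraph V} {k : ℕ} {Y C : Set V}
    (hY : Insep G k Y) (hfin : (bdry G C).Finite) (hle : (bdry G C).ncard ≤ k) :
    ¬ Y ⊆ bdry G C := by
  intro h
  rcases hY.1 with hinf | hcard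
  · exact hinf (hfin.subset h)
  · have := Set.ncard_le_ncard h hfin
    omega

lemma insep_same_side {G : SimpleGraph V} {k : ℕ} {Y C : Set V}
    (hY : Insep G k Y) (hfin : (bdry G C).Finite) (hle : (bdry G C).ncard ≤ k) :
    (∀ Z : Set V, Insep G k Z → Y ⊆ Z → Z ⊆ C ∪ bdry G C) ∨
    (∀ Z : Set V, Insep G k Z → Y ⊆ Z → Z ⊆ cstar G C ∪ bdry G C) := by
  by_cases h : ∀ Z : Set V, Insep G k Z → Y ⊆ Z → Z ⊆ C ∪ bdry G C
  · exact Or.inl h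
  · push_neg at h
    obtain ⟨Z₀, hZ₀, hYZ₀, hns⟩ := h
    have hZ₀s : Z₀ ⊆ cstar G C ∪ bdry G C := (hZ₀.2 C hfin hle).resolve_left hns
    right
    intro Z hZ hYZ
    rcases hZ.2 C hfin hle with hs | hs
    · exfalso
      apply insep_not_sub_bdry hY hfin hle
      intro x hx
      exact sides_inter G C ⟨hs (hYZ hx), hZ₀s (hYZ₀ hx)⟩
    · exact hs

lemma insep_sUnion {G : SimpleGraph V} {k : ℕ} {Y : Set V} (hY : Insep G k Y) :
    Insep G k (⋃₀ {Z : Set V | Insep G k Z ∧ Y ⊆ Z}) := by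
  set M := ⋃₀ {Z : Set V | Insep G k Z ∧ Y ⊆ Z} with hM
  have hYM : Y ⊆ M := fun x hx => ⟨Y, ⟨hY, subset_rfl⟩, hx⟩
  constructor
  · rcases hY.1 with hinf | hcard
    · exact Or.inl fun hfin => hinf (hfin.subset hYM)
    · by_cases hfin : M.Finite
      · exact Or.inr (le_trans hcard (Set.ncard_le_ncard hYM hfin))
      · exact Or.inl hfin
  · intro C hfin hle
    rcases insep_same_side hY hfin hle with h | h
    · left
      rintro x ⟨Z, ⟨hZ, hYZ⟩, hx⟩
      exact h Z hZ hYZ hx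
    · right
      rintro x ⟨Z, ⟨hZ, hYZ⟩, hx⟩
      exact h Z hZ hYZ hx


theorem stmt3 (G : SimpleGraph V) (k : ℕ) (Y : Set V) (hY : Insep G k Y) :
    (∃! M : Set V, Insep G k M ∧ Y ⊆ M ∧
      ∀ Z : Set V, Insep G k Z → Y ⊆ Z → Z ⊆ M) ∧
    ∀ A B : Set V, Insep G k A → Insep G k B → Y ⊆ A → Y ⊆ B →
      Insep G k (A ∪ B) := by
  constructor
  · refine ⟨⋃₀ {Z : Set V | Insep G k Z ∧ Y ⊆ Z}, ⟨insep_sUnion hY,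
      fun x hx => ⟨Y, ⟨hY, subset_rfl⟩, hx⟩,
      fun Z hZ hYZ x hx => ⟨Z, ⟨hZ, hYZ⟩, hx⟩⟩, ?_⟩
    rintro M ⟨hM, hYM, hmax⟩
    apply subset_antisymm
    · exact fun x hx => ⟨M, ⟨hM, hYM⟩, hx⟩
    · exact hmax _ (insep_sUnion hY) (fun x hx => ⟨Y, ⟨hY, subset_rfl⟩, hx⟩)
  · intro A B hA hB hYA hYB
    constructor
    · rcases hA.1 with hinf | hcard
      · exact Or.inl fun hfin => hinf (hfin.subset Set.subset_union_left)
      · by_cases hfin : (A ∪ B).Finite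
        · exact Or.inr (le_trans hcard (Set.ncard_le_ncard Set.subset_union_left hfin))
        · exact Or.inl hfin
    · intro C hfin hle
      rcases insep_same_side hY hfin hle with h | h
      · exact Or.inl (Set.union_subset (h A hA hYA) (h B hB hYB))
      · exact Or.inr (Set.union_subset (h A hA hYA) (h B hB hYB))
end

section
/- In a cut system, if C is a cut then C* contains a cut, and every component of C* which contains a cut is itself a cut. -/
variable {V : Type*}

lemma exists_comp_of_conn (G : SimpleGraph V) {E A : Set V} (hEA : E ⊆ A)
    (hE : ConnSet G E) (hne : E.Nonempty) : ∃ Q : Set V, IsCompOf G Q A ∧ E ⊆ Q := by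
  obtain ⟨e, he⟩ := hne
  have heA : e ∈ A := hEA he
  set Q : Set V := {v | ∃ h : v ∈ A, (G.induce A).Reachable ⟨e, heA⟩ ⟨v, h⟩} with hQ
  have hQA : Q ⊆ A := fun v hv => hv.1
  have heQ : e ∈ Q := ⟨heA, SimpleGraph.Reachable.refl _⟩
  have hEQ : E ⊆ Q := by
    intro x hx
    refine ⟨hEA hx, ?_⟩
    have : (G.induce E).Reachable ⟨e, he⟩ ⟨x, hx⟩ := hE.preconnected _ _
    exact this.map (SimpleGraph.induceHomOfLE G hEA).toHom
  have hQconn : ConnSet G Q := by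
    apply SimpleGraph.induce_connected_of_patches e heQ
    intro v hv
    obtain ⟨hvA, hr⟩ := hv
    obtain ⟨p⟩ := hr
    let q : G.Walk e v := p.map (SimpleGraph.Embedding.induce A).toHom
    refine ⟨{x | x ∈ q.support}, ?_, q.start_mem_support, q.end_mem_support,
      (q.connected_induce_support).preconnected _ _⟩
    intro x hx
    replace hx : x ∈ p.support.map (SimpleGraph.Embedding.induce (G := G) A).toHom := by
      rw [← SimpleGraph.Walk.support_map]; exact hx
    rw [List.mem_map] at hx
    obtain ⟨⟨y, hyA⟩, hy, rfl⟩ := hx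
    classical
    exact ⟨hyA, ⟨p.takeUntil _ hy⟩⟩
  refine ⟨Q, ⟨hQA, hQconn, ?_⟩, hEQ⟩
  intro R hQR hRA hR
  refine subset_antisymm ?_ hQR
  intro v hv
  have : (G.induce R).Reachable ⟨e, hQR heQ⟩ ⟨v, hv⟩ := hR.preconnected _ _
  exact ⟨hRA hv, this.map (SimpleGraph.induceHomOfLE G hRA).toHom⟩

theorem stmt4 (G : SimpleGraph V) (hG : G.Connected) (𝒞 : Set (Set V))
    (h : IsCutSystem G 𝒞) (C : Set V) (hC : C ∈ 𝒞) :
    (∃ Q : Set V, IsCompOf G Q (cstar G C) ∧ Q ∈ 𝒞) ∧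
    ∀ Q : Set V, IsCompOf G Q (cstar G C) → (∃ E ∈ 𝒞, E ⊆ Q) → Q ∈ 𝒞 := by
  have hdisj : C ∩ cstar G C = ∅ := by
    ext v; simp [cstar]; tauto
  have hdisj' : cstar G C ∩ C = ∅ := by rw [Set.inter_comm]; exact hdisj
  -- from A2 applied to (C, C), obtain a cut inside C*
  have hEstar : ∃ E ∈ 𝒞, E ⊆ cstar G C := by
    obtain ⟨A, B, hopp, ⟨E1, hE1, hE1A⟩, ⟨E2, hE2, hE2B⟩⟩ := h.a2 C hC C hC
    have hne1 := h.nonempty E1 hE1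
    have hne2 := h.nonempty E2 hE2
    rcases hopp with ⟨hA, hB⟩ | ⟨hA, hB⟩ | ⟨hA, hB⟩ | ⟨hA, hB⟩
    · refine ⟨E2, hE2, ?_⟩
      rw [hB, Set.inter_self] at hE2B; exact hE2B
    · refine ⟨E1, hE1, ?_⟩
      rw [hA, Set.inter_self] at hE1A; exact hE1A
    · exfalso; rw [hA, hdisj] at hE1A
      exact hne1.ne_empty (Set.subset_empty_iff.mp hE1A)
    · exfalso; rw [hA, hdisj'] at hE1A
      exact hne1.ne_empty (Set.subset_empty_iff.mp hE1A)
  have part2 : ∀ Q : Set V, IsCompOf G Q (cstar G C) → (∃ E ∈ 𝒞, E ⊆ Q) → Q ∈ 𝒞 := by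
    intro Q hQ hEQ
    refine h.a1 C hC C hC (C ∩ C) (cstar G C ∩ cstar G C) (Or.inl ⟨rfl, rfl⟩)
      ⟨C, hC, by rw [Set.inter_self]⟩ ?_ Q ?_ hEQ
    · obtain ⟨E, hE, hEs⟩ := hEstar
      exact ⟨E, hE, by rw [Set.inter_self]; exact hEs⟩
    · right; rw [Set.inter_self]; exact hQ
  refine ⟨?_, part2⟩
  obtain ⟨E, hE, hEs⟩ := hEstar
  obtain ⟨Q, hQ, hEQ⟩ := exists_comp_of_conn G hEs (h.conn E hE) (h.nonempty E hE)
  exact ⟨Q, hQ, part2 Q hQ ⟨E, hE, hEQ⟩⟩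
end

section
/- Let κ be the minimum value of |NC| over sets C such that NC separates two κ-inseparable sets. Then the collection of connected sets C with |NC| = κ, (C*)* = C, which separate two κ-inseparable sets, forms a cut system (satisfies axioms (A1) and (A2)). -/
variable {V : Type*}

/-- The collection of connected sets with boundary of size `κ`, `(C*)* = C`,
separating two `κ`-inseparable sets. -/
def InsepCuts (G : SimpleGraph V) (κ : ℕ) : Set (Set V) :=
  {C | ConnSet G C ∧ (bdry G C).Finite ∧ (bdry G C).ncard = κ ∧
    cstar G (cstar G C) = C ∧
    ∃ Y₁ Y₂ : Set V, Insep G κ Y₁ ∧ Insep G κ Y₂ ∧ Separates G C Y₁ Y₂}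
section Helpers

variable {G : SimpleGraph V} {C D Q A S U W W' Y E : Set V} {κ k : ℕ} {u v w x y : V}

lemma mem_bdry : v ∈ bdry G C ↔ v ∉ C ∧ ∃ u ∈ C, G.Adj u v := Iff.rfl

lemma mem_cstar : v ∈ cstar G C ↔ v ∉ C ∧ v ∉ bdry G C := by
  simp [cstar, not_or]

lemma cstar_union_bdry : cstar G C ∪ bdry G C = Cᶜ := by
  ext v
  by_cases hb : v ∈ bdry G C
  · simp [hb, mem_cstar, hb.1]
  · simp [hb, mem_cstar]

lemma bdry_cstar_subset : bdry G (cstar G C) ⊆ bdry G C := by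
  rintro v ⟨hv, u, hu, hadj⟩
  have hvC : v ∈ C ∪ bdry G C := by
    by_contra h
    exact hv (mem_cstar.2 ⟨fun h1 => h (Or.inl h1), fun h1 => h (Or.inr h1)⟩)
  rcases hvC with hvC | hvC
  · exact absurd (mem_cstar.1 hu).2 (fun h => h ⟨(mem_cstar.1 hu).1, v, hvC, hadj.symm⟩)
  · exact hvC

lemma bdry_cstar_eq (h : cstar G (cstar G C) = C) : bdry G (cstar G C) = bdry G C := by
  refine subset_antisymm bdry_cstar_subset fun v hv => ?_
  have hvC : v ∉ C := hv.1
  rw [← h] at hvC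
  have : v ∈ cstar G C ∪ bdry G (cstar G C) := by
    by_contra hc
    exact hvC (mem_cstar.2 ⟨fun h1 => hc (Or.inl h1), fun h1 => hc (Or.inr h1)⟩)
  rcases this with h1 | h1
  · exact absurd hv (mem_cstar.1 h1).2
  · exact h1

lemma cstar_cstar_of_bdry (h : bdry G (cstar G C) = bdry G C) : cstar G (cstar G C) = C := by
  show (cstar G C ∪ bdry G (cstar G C))ᶜ = C
  rw [h, cstar_union_bdry, compl_compl]

lemma bdry_subset_of_subset (h : E ⊆ S) : bdry G E ⊆ S ∪ bdry G S := by
  rintro v ⟨hv, u, hu, hadj⟩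
  by_cases hvS : v ∈ S
  · exact Or.inl hvS
  · exact Or.inr ⟨hvS, u, h hu, hadj⟩

lemma closure_mono2 (h : E ⊆ S) : E ∪ bdry G E ⊆ S ∪ bdry G S :=
  Set.union_subset (h.trans Set.subset_union_left) (bdry_subset_of_subset h)

/-- The "link" of a corner `C ∩ D`. -/
def tlink (G : SimpleGraph V) (C D : Set V) : Set V :=
  (bdry G C ∩ (D ∪ bdry G D)) ∪ ((C ∪ bdry G C) ∩ bdry G D)

lemma tlink_subset : tlink G C D ⊆ bdry G C ∪ bdry G D :=
  Set.union_subset (Set.inter_subset_left.trans Set.subset_union_left)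
    (Set.inter_subset_right.trans Set.subset_union_right)

lemma bdry_inter_subset_tlink : bdry G (C ∩ D) ⊆ tlink G C D := by
  rintro v ⟨hv, u, hu, hadj⟩
  have hC : v ∈ C ∪ bdry G C := by
    by_cases h : v ∈ C
    · exact Or.inl h
    · exact Or.inr ⟨h, u, hu.1, hadj⟩
  have hD : v ∈ D ∪ bdry G D := by
    by_cases h : v ∈ D
    · exact Or.inl h
    · exact Or.inr ⟨h, u, hu.2, hadj⟩
  by_cases hvC : v ∈ C
  · have hvD : v ∉ D := fun h => hv ⟨hvC, h⟩
    exact Or.inr ⟨Or.inl hvC, hD.resolve_left hvD⟩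
  · exact Or.inl ⟨hC.resolve_left hvC, hD⟩

lemma closure_inter_eq : (C ∪ bdry G C) ∩ (D ∪ bdry G D) = (C ∩ D) ∪ tlink G C D := by
  ext v
  simp only [tlink, Set.mem_inter_iff, Set.mem_union]
  tauto

end Helpers
section Helpers2

variable {G : SimpleGraph V} {C D Q A S U W W' Y E : Set V} {κ k : ℕ} {u v w x y : V}

lemma tlink_eq : tlink G C D = (bdry G C ∩ (D ∪ bdry G D)) ∪ (C ∩ bdry G D) := by
  ext v
  simp only [tlink, Set.mem_union, Set.mem_inter_iff]
  tauto

lemma tlink_card (hCf : (bdry G C).Finite) (hDf : (bdry G D).Finite)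
    (hC : bdry G (cstar G C) = bdry G C) (hD : bdry G (cstar G D) = bdry G D) :
    (tlink G C D).ncard + (tlink G (cstar G C) (cstar G D)).ncard ≤
      (bdry G C).ncard + (bdry G D).ncard := by
  set X₁ := bdry G C ∩ (D ∪ bdry G D) with hX₁
  set X₂ := bdry G C ∩ (cstar G D ∪ bdry G D) with hX₂
  set Z₁ := C ∩ bdry G D with hZ₁
  set Z₂ := cstar G C ∩ bdry G D with hZ₂
  set Z₀ := bdry G C ∩ bdry G D with hZ₀
  have e1 : tlink G C D = X₁ ∪ Z₁ := tlink_eq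
  have e2 : tlink G (cstar G C) (cstar G D) = X₂ ∪ Z₂ := by
    rw [tlink_eq, hC, hD]
  have fX₁ : X₁.Finite := hCf.subset Set.inter_subset_left
  have fX₂ : X₂.Finite := hCf.subset Set.inter_subset_left
  have fZ₁ : Z₁.Finite := hDf.subset Set.inter_subset_right
  have fZ₂ : Z₂.Finite := hDf.subset Set.inter_subset_right
  have hXu : X₁ ∪ X₂ = bdry G C := by
    rw [hX₁, hX₂, ← Set.inter_union_distrib_left]
    have : D ∪ bdry G D ∪ (cstar G D ∪ bdry G D) = Set.univ := by
      ext v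
      simp only [Set.mem_union, Set.mem_univ, iff_true]
      by_cases h1 : v ∈ D
      · tauto
      · by_cases h2 : v ∈ bdry G D
        · tauto
        · exact Or.inr (Or.inl (mem_cstar.2 ⟨h1, h2⟩))
    rw [this, Set.inter_univ]
  have hXi : X₁ ∩ X₂ ⊆ Z₀ := by
    rintro v ⟨⟨hb, h1⟩, _, h2⟩
    refine ⟨hb, ?_⟩
    rcases h1 with h1 | h1
    · rcases h2 with h2 | h2
      · exact absurd h1 (mem_cstar.1 h2).1
      · exact h2
    · exact h1
  have hsum1 : X₁.ncard + X₂.ncard ≤ (bdry G C).ncard + Z₀.ncard := by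
    have := Set.ncard_union_add_ncard_inter X₁ X₂ fX₁ fX₂
    have hle : (X₁ ∩ X₂).ncard ≤ Z₀.ncard :=
      Set.ncard_le_ncard hXi ((hCf.subset Set.inter_subset_left))
    rw [hXu] at this
    omega
  have hZdisj : Z₁ ∪ Z₂ ∪ Z₀ ⊆ bdry G D :=
    Set.union_subset (Set.union_subset Set.inter_subset_right Set.inter_subset_right)
      Set.inter_subset_right
  have hsum2 : Z₁.ncard + Z₂.ncard + Z₀.ncard ≤ (bdry G D).ncard := by
    have d12 : Disjoint Z₁ Z₂ := by
      rw [Set.disjoint_left]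
      rintro a ⟨h1, _⟩ ⟨h2, _⟩
      exact (mem_cstar.1 h2).1 h1
    have d10 : Disjoint (Z₁ ∪ Z₂) Z₀ := by
      rw [Set.disjoint_left]
      rintro a (⟨h1, _⟩ | ⟨h1, _⟩) ⟨h2, _⟩
      · exact h2.1 h1
      · exact (mem_cstar.1 h1).2 h2
    have c1 : (Z₁ ∪ Z₂).ncard = Z₁.ncard + Z₂.ncard :=
      Set.ncard_union_eq d12 fZ₁ fZ₂
    have c2 : (Z₁ ∪ Z₂ ∪ Z₀).ncard = (Z₁ ∪ Z₂).ncard + Z₀.ncard :=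
      Set.ncard_union_eq d10 (fZ₁.union fZ₂) (hCf.subset Set.inter_subset_left)
    have := Set.ncard_le_ncard hZdisj hDf
    omega
  have t1 : (tlink G C D).ncard ≤ X₁.ncard + Z₁.ncard := by
    rw [e1]; exact (Set.ncard_union_le _ _).trans (le_refl _)
  have t2 : (tlink G (cstar G C) (cstar G D)).ncard ≤ X₂.ncard + Z₂.ncard := by
    rw [e2]; exact Set.ncard_union_le _ _
  omega

lemma insep_mono (h : Insep G κ Y) (hk : k ≤ κ) : Insep G k Y := by
  refine ⟨?_, fun S hf hc => h.2 S hf (hc.trans hk)⟩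
  rcases h.1 with h1 | h1
  · exact Or.inl h1
  · exact Or.inr (le_trans (by omega) h1)

lemma insep_not_subset (h : Insep G κ Y) (hSf : S.Finite) (hS : S.ncard ≤ κ) : ¬ Y ⊆ S := by
  intro hsub
  rcases h.1 with h1 | h1
  · exact h1 (hSf.subset hsub)
  · have := Set.ncard_le_ncard hsub hSf
    omega

lemma insep_side (h : Insep G κ Y) (hf : (bdry G S).Finite) (hc : (bdry G S).ncard ≤ κ) :
    Y ⊆ S ∪ bdry G S ∨ Y ∩ S = ∅ := by
  rcases h.2 S hf hc with h1 | h1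
  · exact Or.inl h1
  · right
    rw [← Set.disjoint_iff_inter_eq_empty]
    rw [cstar_union_bdry] at h1
    exact Set.disjoint_left.2 fun a ha haS => (h1 ha) haS

end Helpers2
section Helpers3

variable {G : SimpleGraph V} {C D Q A S R U W W' Y E : Set V} {κ k : ℕ} {u v w x y : V}

/-- One step inside `U`. -/
def StepIn (G : SimpleGraph V) (U : Set V) (x y : V) : Prop := x ∈ U ∧ y ∈ U ∧ G.Adj x y

lemma stepIn_symm (h : StepIn G U x y) : StepIn G U y x := ⟨h.2.1, h.1, h.2.2.symm⟩

lemma rtg_symm (h : Relation.ReflTransGen (StepIn G U) x y) :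
    Relation.ReflTransGen (StepIn G U) y x :=
  Std.Symm.symm (self := @Relation.ReflTransGen.symmetric _ (StepIn G U) ⟨fun _ _ hs => stepIn_symm hs⟩) _ _ h

lemma walk_to_rtg : ∀ {a b : U} (_ : (G.induce U).Walk a b),
    Relation.ReflTransGen (StepIn G U) a.1 b.1 := by
  intro a b p
  induction p with
  | nil => exact Relation.ReflTransGen.refl
  | @cons x y z h p ih =>
      exact Relation.ReflTransGen.head ⟨x.2, y.2, h⟩ ih

lemma rtg_to_reachable (h : Relation.ReflTransGen (StepIn G U) x y) :
    ∀ (hx : x ∈ U) (hy : y ∈ U), (G.induce U).Reachable ⟨x, hx⟩ ⟨y, hy⟩ := by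
  induction h with
  | refl => intro hx hy; rfl
  | @tail b c hab hbc ih =>
      intro hx hy
      exact (ih hx hbc.1).trans (SimpleGraph.Adj.reachable (by exact hbc.2.2))

lemma connSet_iff : ConnSet G S ↔ S.Nonempty ∧
    ∀ a ∈ S, ∀ b ∈ S, Relation.ReflTransGen (StepIn G S) a b := by
  constructor
  · intro h
    refine ⟨Set.nonempty_coe_sort.1 h.nonempty, fun a ha b hb => ?_⟩
    obtain ⟨p⟩ := h.preconnected ⟨a, ha⟩ ⟨b, hb⟩
    exact walk_to_rtg p
  · rintro ⟨⟨a, ha⟩, h⟩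
    rw [ConnSet, SimpleGraph.connected_iff]
    refine ⟨fun x y => ?_, ⟨⟨a, ha⟩⟩⟩
    obtain ⟨x, hx⟩ := x
    obtain ⟨y, hy⟩ := y
    exact rtg_to_reachable (h x hx y hy) hx hy

/-- The set of vertices of `U` reachable from `v` inside `U`. -/
def reachSet (G : SimpleGraph V) (U : Set V) (v : V) : Set V :=
  {w ∈ U | Relation.ReflTransGen (StepIn G U) v w}

lemma reachSet_subset : reachSet G U v ⊆ U := fun _ h => h.1

lemma reachSet_mem_self (hv : v ∈ U) : v ∈ reachSet G U v :=
  ⟨hv, Relation.ReflTransGen.refl⟩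

lemma rtg_restrict (hv : v ∈ U) :
    ∀ {w}, Relation.ReflTransGen (StepIn G U) v w →
      Relation.ReflTransGen (StepIn G (reachSet G U v)) v w := by
  intro w h
  induction h with
  | refl => exact Relation.ReflTransGen.refl
  | @tail b c hab hbc ih =>
      exact ih.tail ⟨⟨hbc.1, hab⟩, ⟨hbc.2.1, hab.tail hbc⟩, hbc.2.2⟩

lemma isCompOf_reachSet (hv : v ∈ U) : IsCompOf G (reachSet G U v) U := by
  refine ⟨reachSet_subset, ?_, ?_⟩
  · rw [connSet_iff]
    refine ⟨⟨v, reachSet_mem_self hv⟩, fun a ha b hb => ?_⟩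
    exact (rtg_symm (rtg_restrict hv ha.2)).trans (rtg_restrict hv hb.2)
  · intro R hQR hRU hR
    refine subset_antisymm (fun r hr => ?_) hQR
    have hvr := (connSet_iff.1 hR).2 v (hQR (reachSet_mem_self hv)) r hr
    exact ⟨hRU hr, Relation.ReflTransGen.mono (fun a b hab => ⟨hRU hab.1, hRU hab.2.1, hab.2.2⟩) _ _ hvr⟩

lemma connSet_insert (hQ : ConnSet G Q) (hu : u ∈ Q) (hadj : G.Adj u v) :
    ConnSet G (insert v Q) := by
  rw [connSet_iff] at hQ ⊢
  have key : ∀ x ∈ insert v Q, Relation.ReflTransGen (StepIn G (insert v Q)) x u := by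
    rintro x (rfl | hx)
    · exact Relation.ReflTransGen.single ⟨Set.mem_insert _ _, Set.mem_insert_of_mem _ hu,
        hadj.symm⟩
    · exact Relation.ReflTransGen.mono
        (fun a b hab => ⟨Set.mem_insert_of_mem _ hab.1, Set.mem_insert_of_mem _ hab.2.1, hab.2.2⟩) _ _ (hQ.2 x hx u hu)
  exact ⟨⟨u, Set.mem_insert_of_mem _ hu⟩,
    fun a ha b hb => (key a ha).trans (rtg_symm (key b hb))⟩

lemma bdry_isCompOf (hQ : IsCompOf G Q U) : bdry G Q ⊆ bdry G U := by
  rintro v ⟨hvQ, u, huQ, hadj⟩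
  by_cases hvU : v ∈ U
  · exfalso
    have heq : insert v Q = Q := hQ.2.2 _ (Set.subset_insert _ _)
      (Set.insert_subset hvU hQ.1) (connSet_insert hQ.2.1 huQ hadj)
    exact hvQ (heq ▸ Set.mem_insert v Q)
  · exact ⟨hvU, u, hQ.1 huQ, hadj⟩

end Helpers3
section Helpers4

variable {G : SimpleGraph V} {C D Q A S R U W W' Y E : Set V} {κ k : ℕ} {u v w x y : V}

/-- A "side": finite boundary of size `κ` with `(C*)* = C`. -/
def GoodSide (G : SimpleGraph V) (κ : ℕ) (C : Set V) : Prop :=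
  (bdry G C).Finite ∧ (bdry G C).ncard = κ ∧ cstar G (cstar G C) = C

lemma GoodSide.bdry_cstar (h : GoodSide G κ C) : bdry G (cstar G C) = bdry G C :=
  bdry_cstar_eq h.2.2

lemma GoodSide.star (h : GoodSide G κ C) : GoodSide G κ (cstar G C) := by
  refine ⟨h.bdry_cstar ▸ h.1, h.bdry_cstar ▸ h.2.1, ?_⟩
  exact congrArg (cstar G) h.2.2

lemma GoodSide.exists_nbr (h : GoodSide G κ C) (hv : v ∈ bdry G C) :
    ∃ u ∈ cstar G C, G.Adj u v := by
  rw [← h.bdry_cstar] at hv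
  exact hv.2

variable (hmin : ∀ k < κ, ¬ ∃ (C Y₁ Y₂ : Set V), (bdry G C).Finite ∧
      (bdry G C).ncard = k ∧ Insep G k Y₁ ∧ Insep G k Y₂ ∧
      Separates G C Y₁ Y₂)

include hmin in
/-- If `W, W'` are `κ`-inseparable and positioned at the corner `C ∩ D` and away from `C`,
then the link of the corner has at least `κ` vertices. -/
lemma tlink_ge (hC : GoodSide G κ C) (hD : GoodSide G κ D)
    (hW : Insep G κ W) (hW' : Insep G κ W')
    (hWs : W ⊆ (C ∪ bdry G C) ∩ (D ∪ bdry G D))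
    (hW'C : ∀ x ∈ W', x ∉ C) :
    κ ≤ (tlink G C D).ncard := by
  by_contra hlt
  push_neg at hlt
  have hTfin : (tlink G C D).Finite := (hC.1.union hD.1).subset tlink_subset
  have hWT : ¬ W ⊆ tlink G C D := insep_not_subset hW hTfin (le_of_lt hlt)
  obtain ⟨w₀, hw₀W, hw₀T⟩ := Set.not_subset.1 hWT
  have hw₀A : w₀ ∈ C ∩ D := by
    have := hWs hw₀W
    rw [closure_inter_eq] at this
    exact this.resolve_right hw₀T
  set Q := reachSet G (C ∩ D) w₀ with hQdef
  have hQ : IsCompOf G Q (C ∩ D) := isCompOf_reachSet hw₀A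
  have hbQ : bdry G Q ⊆ tlink G C D := (bdry_isCompOf hQ).trans bdry_inter_subset_tlink
  have hbQfin : (bdry G Q).Finite := hTfin.subset hbQ
  have hbQcard : (bdry G Q).ncard < κ :=
    lt_of_le_of_lt (Set.ncard_le_ncard hbQ hTfin) hlt
  have hWQ : W ⊆ Q ∪ bdry G Q := by
    rcases insep_side hW hbQfin (le_of_lt hbQcard) with h | h
    · exact h
    · exfalso
      exact (Set.eq_empty_iff_forall_notMem.1 h w₀) ⟨hw₀W, reachSet_mem_self hw₀A⟩
  have hW'Q : W' ⊆ cstar G Q ∪ bdry G Q := by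
    rw [cstar_union_bdry]
    exact fun a ha h => hW'C a ha (hQ.1 h).1
  have hsep : Separates G Q W W' :=
    ⟨hWQ, hW'Q, insep_not_subset hW hbQfin (le_of_lt hbQcard),
      insep_not_subset hW' hbQfin (le_of_lt hbQcard)⟩
  exact hmin _ hbQcard ⟨Q, W, W', hbQfin, rfl,
    insep_mono hW (le_of_lt hbQcard), insep_mono hW' (le_of_lt hbQcard), hsep⟩

include hmin in
/-- Main lemma: a component of the corner `C ∩ D` meeting a suitably placed
`κ`-inseparable set is itself a cut of the system. -/
lemma main_comp (hC : GoodSide G κ C) (hD : GoodSide G κ D)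
    (hW : Insep G κ W) (hW' : Insep G κ W')
    (hWs : W ⊆ (C ∪ bdry G C) ∩ (D ∪ bdry G D))
    (hW's : W' ⊆ (cstar G C ∪ bdry G C) ∩ (cstar G D ∪ bdry G D))
    (hQ : IsCompOf G Q (C ∩ D)) (hanch : (W ∩ Q).Nonempty) :
    Q ∈ InsepCuts G κ := by
  -- the opposite link is large, hence our link is small
  have hT' : κ ≤ (tlink G (cstar G C) (cstar G D)).ncard := by
    refine tlink_ge hmin hC.star hD.star hW' hW ?_ ?_
    · rwa [hC.bdry_cstar, hD.bdry_cstar]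
    · intro a ha hac
      rcases hWs ha with ⟨h1, _⟩
      rcases h1 with h1 | h1
      · exact (mem_cstar.1 hac).1 h1
      · exact (mem_cstar.1 hac).2 h1
  have hTsum := tlink_card hC.1 hD.1 hC.bdry_cstar hD.bdry_cstar
  rw [hC.2.1, hD.2.1] at hTsum
  have hT : (tlink G C D).ncard ≤ κ := by omega
  have hTfin : (tlink G C D).Finite := (hC.1.union hD.1).subset tlink_subset
  -- boundary of Q
  have hbQ : bdry G Q ⊆ tlink G C D := (bdry_isCompOf hQ).trans bdry_inter_subset_tlink
  have hbQfin : (bdry G Q).Finite := hTfin.subset hbQ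
  have hbQcard : (bdry G Q).ncard ≤ κ := le_trans (Set.ncard_le_ncard hbQ hTfin) hT
  -- W lies on the Q side
  have hWQ : W ⊆ Q ∪ bdry G Q := by
    rcases insep_side hW hbQfin hbQcard with h | h
    · exact h
    · exfalso
      obtain ⟨a, ha⟩ := hanch
      exact (Set.eq_empty_iff_forall_notMem.1 h a) ha
  have hW'Q : W' ⊆ cstar G Q ∪ bdry G Q := by
    rw [cstar_union_bdry]
    intro a ha hac
    rcases hW's ha with ⟨h1, _⟩
    have hcC := (hQ.1 hac).1
    rcases h1 with h1 | h1
    · exact (mem_cstar.1 h1).1 hcC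
    · exact h1.1 hcC
  have hsep : Separates G Q W W' :=
    ⟨hWQ, hW'Q, insep_not_subset hW hbQfin hbQcard, insep_not_subset hW' hbQfin hbQcard⟩
  -- the boundary has exactly κ vertices
  have hbQeq : (bdry G Q).ncard = κ := by
    by_contra hne
    have hlt : (bdry G Q).ncard < κ := lt_of_le_of_ne hbQcard hne
    exact hmin _ hlt ⟨Q, W, W', hbQfin, rfl, insep_mono hW (le_of_lt hlt),
      insep_mono hW' (le_of_lt hlt), hsep⟩
  -- (Q*)* = Q
  have hstar : cstar G (cstar G Q) = Q := by
    refine cstar_cstar_of_bdry (subset_antisymm bdry_cstar_subset ?_)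
    intro p hp
    have hpT : p ∈ tlink G C D := hbQ hp
    have hnbr : ∃ q ∈ cstar G Q, G.Adj q p := by
      rcases hpT with ⟨hpC, _⟩ | ⟨_, hpD⟩
      · obtain ⟨q, hq, hadj⟩ := hC.exists_nbr hpC
        refine ⟨q, mem_cstar.2 ⟨fun hqQ => (mem_cstar.1 hq).1 (hQ.1 hqQ).1, ?_⟩, hadj⟩
        rintro ⟨hqQ, x, hxQ, hadjx⟩
        exact (mem_cstar.1 hq).2 ⟨fun hqC => (mem_cstar.1 hq).1 hqC, x, (hQ.1 hxQ).1, hadjx⟩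
      · obtain ⟨q, hq, hadj⟩ := hD.exists_nbr hpD
        refine ⟨q, mem_cstar.2 ⟨fun hqQ => (mem_cstar.1 hq).1 (hQ.1 hqQ).2, ?_⟩, hadj⟩
        rintro ⟨hqQ, x, hxQ, hadjx⟩
        exact (mem_cstar.1 hq).2 ⟨fun hqD => (mem_cstar.1 hq).1 hqD, x, (hQ.1 hxQ).2, hadjx⟩
    obtain ⟨q, hq, hadj⟩ := hnbr
    exact ⟨fun hpc => (mem_cstar.1 hpc).2 hp, q, hq, hadj⟩
  exact ⟨hQ.2.1, hbQfin, hbQeq, hstar, W, W', hW, hW', hsep⟩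

include hmin in
/-- Existence version: a cut of the system inside the corner `C ∩ D`. -/
lemma main_exists (hC : GoodSide G κ C) (hD : GoodSide G κ D)
    (hW : Insep G κ W) (hW' : Insep G κ W')
    (hWs : W ⊆ (C ∪ bdry G C) ∩ (D ∪ bdry G D))
    (hW's : W' ⊆ (cstar G C ∪ bdry G C) ∩ (cstar G D ∪ bdry G D)) :
    ∃ Q ∈ InsepCuts G κ, Q ⊆ C ∩ D := by
  have hT' : κ ≤ (tlink G (cstar G C) (cstar G D)).ncard := by
    refine tlink_ge hmin hC.star hD.star hW' hW ?_ ?_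
    · rwa [hC.bdry_cstar, hD.bdry_cstar]
    · intro a ha hac
      rcases hWs ha with ⟨h1, _⟩
      rcases h1 with h1 | h1
      · exact (mem_cstar.1 hac).1 h1
      · exact (mem_cstar.1 hac).2 h1
  have hTsum := tlink_card hC.1 hD.1 hC.bdry_cstar hD.bdry_cstar
  rw [hC.2.1, hD.2.1] at hTsum
  have hT : (tlink G C D).ncard ≤ κ := by omega
  have hTfin : (tlink G C D).Finite := (hC.1.union hD.1).subset tlink_subset
  have hWT : ¬ W ⊆ tlink G C D := insep_not_subset hW hTfin hT
  obtain ⟨w₀, hw₀W, hw₀T⟩ := Set.not_subset.1 hWT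
  have hw₀A : w₀ ∈ C ∩ D := by
    have := hWs hw₀W
    rw [closure_inter_eq] at this
    exact this.resolve_right hw₀T
  refine ⟨reachSet G (C ∩ D) w₀,
    main_comp hmin hC hD hW hW' hWs hW's (isCompOf_reachSet hw₀A)
      ⟨w₀, hw₀W, reachSet_mem_self hw₀A⟩, reachSet_subset⟩

end Helpers4
section Helpers5

variable {G : SimpleGraph V} {C D Q A S R U W W' Y E : Set V} {κ k : ℕ} {u v w x y : V}

lemma cut_insep (hE : E ∈ InsepCuts G κ) :
    ∃ Y, Insep G κ Y ∧ Y ⊆ E ∪ bdry G E ∧ (Y ∩ E).Nonempty := by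
  obtain ⟨_, _, _, _, Y₁, Y₂, h1, _, hs1, _, hn1, _⟩ := hE
  obtain ⟨a, ha, hab⟩ := Set.not_subset.1 hn1
  exact ⟨Y₁, h1, hs1, a, ha, (hs1 ha).resolve_right hab⟩

lemma cut_in_corner (hE : E ∈ InsepCuts G κ) (hsub : E ⊆ C ∩ D) :
    ∃ Y, Insep G κ Y ∧ Y ⊆ (C ∪ bdry G C) ∩ (D ∪ bdry G D) := by
  obtain ⟨Y, hY, hYs, _⟩ := cut_insep hE
  refine ⟨Y, hY, ?_⟩
  rw [closure_inter_eq]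
  exact hYs.trans ((closure_mono2 hsub).trans
    (Set.union_subset_union_right _ bdry_inter_subset_tlink))

variable (hmin : ∀ k < κ, ¬ ∃ (C Y₁ Y₂ : Set V), (bdry G C).Finite ∧
      (bdry G C).ncard = k ∧ Insep G k Y₁ ∧ Insep G k Y₂ ∧
      Separates G C Y₁ Y₂)

include hmin in
lemma a1_case (hC : GoodSide G κ C) (hD : GoodSide G κ D)
    (hQ : IsCompOf G Q (C ∩ D)) (hE : ∃ E ∈ InsepCuts G κ, E ⊆ Q)
    (hE' : ∃ E ∈ InsepCuts G κ, E ⊆ cstar G C ∩ cstar G D) :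
    Q ∈ InsepCuts G κ := by
  obtain ⟨E, hEc, hEQ⟩ := hE
  obtain ⟨Y, hY, hYs, hYE⟩ := cut_insep hEc
  obtain ⟨E', hE'c, hE's⟩ := hE'
  obtain ⟨Y', hY', hY's⟩ := cut_in_corner hE'c hE's
  rw [hC.bdry_cstar, hD.bdry_cstar] at hY's
  refine main_comp hmin hC hD hY hY' ?_ hY's hQ ?_
  · have h1 : Y ⊆ (C ∩ D) ∪ bdry G (C ∩ D) :=
      hYs.trans ((closure_mono2 hEQ).trans (closure_mono2 hQ.1))
    rw [closure_inter_eq]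
    exact h1.trans (Set.union_subset_union_right _ bdry_inter_subset_tlink)
  · obtain ⟨a, ha, haE⟩ := hYE
    exact ⟨a, ha, hEQ haE⟩

include hmin in
lemma a2_case (hC : GoodSide G κ C) (hD : GoodSide G κ D)
    (hW : Insep G κ W) (hW' : Insep G κ W')
    (hWs : W ⊆ (C ∪ bdry G C) ∩ (D ∪ bdry G D))
    (hW's : W' ⊆ (cstar G C ∪ bdry G C) ∩ (cstar G D ∪ bdry G D)) :
    (∃ E ∈ InsepCuts G κ, E ⊆ C ∩ D) ∧
      (∃ E ∈ InsepCuts G κ, E ⊆ cstar G C ∩ cstar G D) := by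
  constructor
  · exact main_exists hmin hC hD hW hW' hWs hW's
  · refine main_exists hmin hC.star hD.star hW' hW ?_ ?_
    · rwa [hC.bdry_cstar, hD.bdry_cstar]
    · rwa [hC.bdry_cstar, hD.bdry_cstar, hC.2.2, hD.2.2]

end Helpers5

theorem stmt5 (G : SimpleGraph V) (hG : G.Connected) (κ : ℕ)
    (hex : (InsepCuts G κ).Nonempty)
    (hmin : ∀ k < κ, ¬ ∃ (C Y₁ Y₂ : Set V), (bdry G C).Finite ∧
      (bdry G C).ncard = k ∧ Insep G k Y₁ ∧ Insep G k Y₂ ∧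
      Separates G C Y₁ Y₂) :
    IsCutSystem G (InsepCuts G κ) := by
  classical
  have gs : ∀ X ∈ InsepCuts G κ, GoodSide G κ X := fun X hX => ⟨hX.2.1, hX.2.2.1, hX.2.2.2.1⟩
  refine ⟨?_, ?_, ?_, ?_, ?_, ?_⟩
  · rintro C ⟨_, _, _, _, Y₁, Y₂, _, _, hs1, _, hn1, _⟩
    obtain ⟨a, ha, hab⟩ := Set.not_subset.1 hn1
    exact ⟨a, (hs1 ha).resolve_right hab⟩
  · exact fun C hC => hC.1
  · exact fun C hC => hC.2.1
  · exact fun C hC => hC.2.2.2.1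
  · -- axiom (A1)
    rintro C hC D hD A B hopp hA hB Q hQcomp hQE
    have gsC := gs C hC
    have gsD := gs D hD
    have sC : cstar G (cstar G C) = C := hC.2.2.2.1
    have sD : cstar G (cstar G D) = D := hD.2.2.2.1
    rcases hopp with ⟨rfl, rfl⟩ | ⟨rfl, rfl⟩ | ⟨rfl, rfl⟩ | ⟨rfl, rfl⟩ <;>
      rcases hQcomp with hQcomp | hQcomp
    · exact a1_case hmin gsC gsD hQcomp hQE hB
    · refine a1_case hmin gsC.star gsD.star hQcomp hQE ?_
      obtain ⟨E, hEc, hEs⟩ := hA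
      exact ⟨E, hEc, by rwa [sC, sD]⟩
    · refine a1_case hmin gsC.star gsD.star hQcomp hQE ?_
      obtain ⟨E, hEc, hEs⟩ := hB
      exact ⟨E, hEc, by rwa [sC, sD]⟩
    · exact a1_case hmin gsC gsD hQcomp hQE hA
    · refine a1_case hmin gsC gsD.star hQcomp hQE ?_
      obtain ⟨E, hEc, hEs⟩ := hB
      exact ⟨E, hEc, by rwa [sD]⟩
    · refine a1_case hmin gsC.star gsD hQcomp hQE ?_
      obtain ⟨E, hEc, hEs⟩ := hA
      exact ⟨E, hEc, by rwa [sC]⟩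
    · refine a1_case hmin gsC.star gsD hQcomp hQE ?_
      obtain ⟨E, hEc, hEs⟩ := hB
      exact ⟨E, hEc, by rwa [sC]⟩
    · refine a1_case hmin gsC gsD.star hQcomp hQE ?_
      obtain ⟨E, hEc, hEs⟩ := hA
      exact ⟨E, hEc, by rwa [sD]⟩
  · -- axiom (A2)
    rintro C hC D hD
    have gsC := gs C hC
    have gsD := gs D hD
    have sC : cstar G (cstar G C) = C := hC.2.2.2.1
    have sD : cstar G (cstar G D) = D := hD.2.2.2.1
    obtain ⟨_, fC, cC, _, Y₁, Y₂, hY₁, hY₂, sY1, sY2, _, _⟩ := hC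
    obtain ⟨_, fD, cD, _, Z₁, Z₂, hZ₁, hZ₂, sZ1, sZ2, _, _⟩ := hD
    have dY₁ := hY₁.2 D fD (le_of_eq cD)
    have dY₂ := hY₂.2 D fD (le_of_eq cD)
    have cZ₁ := hZ₁.2 C fC (le_of_eq cC)
    have cZ₂ := hZ₂.2 C fC (le_of_eq cC)
    rcases dY₁ with dY₁ | dY₁ <;> rcases dY₂ with dY₂ | dY₂
    · -- both Y's on the D side; use Z₂
      rcases cZ₂ with cZ₂ | cZ₂
      · -- Z₂ on the C side : corners C* ∩ D and C ∩ D*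
        obtain ⟨h1, h2⟩ := a2_case hmin gsC.star gsD hY₂ hZ₂
          (by rw [gsC.bdry_cstar]; exact Set.subset_inter sY2 dY₂)
          (by rw [sC, gsC.bdry_cstar]; exact Set.subset_inter cZ₂ sZ2)
        refine ⟨cstar G C ∩ D, C ∩ cstar G D, Or.inr (Or.inr (Or.inr ⟨rfl, rfl⟩)), h1, ?_⟩
        obtain ⟨E, hEc, hEs⟩ := h2
        exact ⟨E, hEc, by rwa [sC] at hEs⟩
      · -- Z₂ on the C* side : corners C ∩ D and C* ∩ D*
        obtain ⟨h1, h2⟩ := a2_case hmin gsC gsD hY₁ hZ₂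
          (Set.subset_inter sY1 dY₁) (Set.subset_inter cZ₂ sZ2)
        exact ⟨C ∩ D, cstar G C ∩ cstar G D, Or.inl ⟨rfl, rfl⟩, h1, h2⟩
    · -- Y₁ on D side, Y₂ on D* side : corners C ∩ D and C* ∩ D*
      obtain ⟨h1, h2⟩ := a2_case hmin gsC gsD hY₁ hY₂
        (Set.subset_inter sY1 dY₁) (Set.subset_inter sY2 dY₂)
      exact ⟨C ∩ D, cstar G C ∩ cstar G D, Or.inl ⟨rfl, rfl⟩, h1, h2⟩
    · -- Y₁ on D* side, Y₂ on D side : corners C ∩ D* and C* ∩ D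
      obtain ⟨h1, h2⟩ := a2_case hmin gsC gsD.star hY₁ hY₂
        (by rw [gsD.bdry_cstar]; exact Set.subset_inter sY1 dY₁)
        (by rw [sD, gsD.bdry_cstar]; exact Set.subset_inter sY2 dY₂)
      refine ⟨C ∩ cstar G D, cstar G C ∩ D, Or.inr (Or.inr (Or.inl ⟨rfl, rfl⟩)), h1, ?_⟩
      obtain ⟨E, hEc, hEs⟩ := h2
      exact ⟨E, hEc, by rwa [sD] at hEs⟩
    · -- both Y's on the D* side; use Z₁
      rcases cZ₁ with cZ₁ | cZ₁
      · -- Z₁ on the C side : corners C ∩ D and C* ∩ D*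
        obtain ⟨h1, h2⟩ := a2_case hmin gsC gsD hZ₁ hY₂
          (Set.subset_inter cZ₁ sZ1) (Set.subset_inter sY2 dY₂)
        exact ⟨C ∩ D, cstar G C ∩ cstar G D, Or.inl ⟨rfl, rfl⟩, h1, h2⟩
      · -- Z₁ on the C* side : corners C* ∩ D and C ∩ D*
        obtain ⟨h1, h2⟩ := a2_case hmin gsC.star gsD hZ₁ hY₁
          (by rw [gsC.bdry_cstar]; exact Set.subset_inter cZ₁ sZ1)
          (by rw [sC, gsC.bdry_cstar]; exact Set.subset_inter sY1 dY₁)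
        refine ⟨cstar G C ∩ D, C ∩ cstar G D, Or.inr (Or.inr (Or.inr ⟨rfl, rfl⟩)), h1, ?_⟩
        obtain ⟨E, hEc, hEs⟩ := h2
        exact ⟨E, hEc, by rwa [sC] at hEs⟩
end

section
/- If a thin cut system has no slices, then pre-cuts E and F are nested if and only if one of the inclusions E ⊆ F, E ⊆ F*, E* ⊆ F, E* ⊆ F* holds. -/
variable {V : Type*}

lemma mem_union_bdry_of_adj {G : SimpleGraph V} {C : Set V} {u v : V}
    (hu : u ∈ C) (h : G.Adj u v) : v ∈ C ∪ bdry G C := by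
  by_cases hv : v ∈ C
  · exact Or.inl hv
  · exact Or.inr ⟨hv, u, hu, h⟩

lemma notMem_cstar {G : SimpleGraph V} {C : Set V} {u v : V}
    (hu : u ∈ C) (h : G.Adj u v) : v ∉ cstar G C :=
  fun hv => hv (mem_union_bdry_of_adj hu h)

lemma bdry_cstar_of {G : SimpleGraph V} {C : Set V}
    (h : cstar G (cstar G C) = C) : bdry G (cstar G C) = bdry G C := by
  have hcompl : cstar G C ∪ bdry G (cstar G C) = Cᶜ := by
    have h2 : (cstar G C ∪ bdry G (cstar G C))ᶜ = C := h
    simpa only [compl_compl] using congrArg compl h2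
  ext v
  constructor
  · rintro hv
    have hvC : v ∉ C := by
      have : v ∈ Cᶜ := hcompl ▸ (Or.inr hv)
      exact this
    have hvD : v ∉ cstar G C := hv.1
    have : v ∈ C ∪ bdry G C := not_not.mp hvD
    rcases this with h1 | h1
    · exact absurd h1 hvC
    · exact h1
  · rintro hv
    have hvC : v ∉ C := hv.1
    have : v ∈ cstar G C ∪ bdry G (cstar G C) := hcompl ▸ hvC
    rcases this with h1 | h1
    · exact absurd (Or.inr hv) h1
    · exact h1

-- Step relation and reachability set
def Step (G : SimpleGraph V) (s : Set V) (a b : V) : Prop :=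
  a ∈ s ∧ b ∈ s ∧ G.Adj a b

lemma reachSet_subset_s10 {G : SimpleGraph V} {s : Set V} {v : V} (hv : v ∈ s) :
    {u | Relation.ReflTransGen (Step G s) v u} ⊆ s := by
  intro u hu
  induction hu with
  | refl => exact hv
  | tail _ hstep _ => exact hstep.2.1

lemma reachSet_connSet {G : SimpleGraph V} {s : Set V} {v : V} (hv : v ∈ s) :
    ConnSet G {u | Relation.ReflTransGen (Step G s) v u} := by
  set K := {u | Relation.ReflTransGen (Step G s) v u} with hK
  have hvK : v ∈ K := Relation.ReflTransGen.refl
  have key : ∀ u (hu : u ∈ K),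
      (G.induce K).Reachable ⟨v, hvK⟩ ⟨u, hu⟩ := by
    intro u hu
    induction hu with
    | refl => exact SimpleGraph.Reachable.refl _
    | @tail b c hb hstep ih =>
      have hbK : b ∈ K := hb
      have hcK : c ∈ K := hb.tail hstep
      have hadj : (G.induce K).Adj ⟨b, hbK⟩ ⟨c, hcK⟩ := by
        simpa [SimpleGraph.comap_adj] using hstep.2.2
      exact ih.trans hadj.reachable
  have hne : Nonempty K := ⟨⟨v, hvK⟩⟩
  exact SimpleGraph.Connected.mk (fun a b => (key a.1 a.2).symm.trans (key b.1 b.2))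

lemma walk_to_rtg_s10 {G : SimpleGraph V} {s R : Set V} (hRs : R ⊆ s) :
    ∀ {a b : R}, (G.induce R).Walk a b → Relation.ReflTransGen (Step G s) a.1 b.1 := by
  intro a b w
  induction w with
  | nil => exact Relation.ReflTransGen.refl
  | @cons x y z hadj p ih =>
    have hxy : G.Adj x.1 y.1 := hadj
    exact Relation.ReflTransGen.head ⟨hRs x.2, hRs y.2, hxy⟩ ih

lemma reachSet_isCompOf {G : SimpleGraph V} {s : Set V} {v : V} (hv : v ∈ s) :
    IsCompOf G {u | Relation.ReflTransGen (Step G s) v u} s := by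
  refine ⟨reachSet_subset_s10 hv, reachSet_connSet hv, ?_⟩
  intro R hKR hRs hconn
  apply Set.Subset.antisymm _ hKR
  intro u hu
  have hvR : v ∈ R := hKR Relation.ReflTransGen.refl
  obtain ⟨w⟩ := hconn.preconnected ⟨v, hvR⟩ ⟨u, hu⟩
  exact walk_to_rtg_s10 hRs w

lemma confine {G : SimpleGraph V} {s P R : Set V}
    (hP : bdry G P ∩ s = ∅) (hR : bdry G R ∩ P = ∅) {v u : V}
    (h : Relation.ReflTransGen (Step G s) v u) (hv : v ∈ P ∩ R) : u ∈ P ∩ R := by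
  induction h with
  | refl => exact hv
  | @tail b c _ hstep ih =>
    have hbP : b ∈ P := ih.1
    have hbR : b ∈ R := ih.2
    have hcP : c ∈ P := by
      by_contra hc
      exact Set.eq_empty_iff_forall_notMem.mp hP c ⟨⟨hc, b, hbP, hstep.2.2⟩, hstep.2.1⟩
    have hcR : c ∈ R := by
      by_contra hc
      exact Set.eq_empty_iff_forall_notMem.mp hR c ⟨⟨hc, b, hbR, hstep.2.2⟩, hcP⟩
    exact ⟨hcP, hcR⟩

lemma precut_pack {G : SimpleGraph V} {𝒞 : Set (Set V)} (hsys : IsCutSystem G 𝒞)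
    {E : Set V} (hE : PreCut G 𝒞 E) :
    ∃ C ∈ 𝒞, bdry G E = bdry G C ∧ bdry G (cstar G E) = bdry G C := by
  rcases hE with hE | ⟨C, hC, rfl⟩
  · exact ⟨E, hE, rfl, bdry_cstar_of (hsys.star_star E hE)⟩
  · refine ⟨C, hC, bdry_cstar_of (hsys.star_star C hC), ?_⟩
    rw [hsys.star_star C hC]

lemma corner_empty {G : SimpleGraph V} {𝒞 : Set (Set V)}
    (hns : ¬ ∃ Q : Set V, IsSlice G 𝒞 Q) {C : Set V} (hC : C ∈ 𝒞) {P R : Set V}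
    (hbP : bdry G P = bdry G C) (hPl : P ∩ bdry G R = ∅)
    (hnc : ¬ ∃ K ∈ 𝒞, K ⊆ P ∩ R) : P ∩ R = ∅ := by
  by_contra hne
  obtain ⟨v, hvP, hvR⟩ := Set.nonempty_iff_ne_empty.mpr hne
  set s : Set V := (bdry G C)ᶜ with hs
  have hvs : v ∈ s := by
    intro hvb
    rw [← hbP] at hvb
    exact hvb.1 hvP
  set K := {u | Relation.ReflTransGen (Step G s) v u} with hKdef
  have hcomp : IsCompOf G K s := reachSet_isCompOf hvs
  have hKC : K ∈ 𝒞 := by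
    by_contra hK
    exact hns ⟨K, ⟨C, hC, hcomp⟩, hK⟩
  have hPs : bdry G P ∩ s = ∅ := by
    rw [hbP, hs]
    exact Set.inter_compl_self _
  have hRP : bdry G R ∩ P = ∅ := by
    rw [Set.inter_comm]
    exact hPl
  have hKsub : K ⊆ P ∩ R := fun u hu => confine hPs hRP hu ⟨hvP, hvR⟩
  exact hnc ⟨K, hKC, hKsub⟩

theorem stmt10 (G : SimpleGraph V) (hG : G.Connected) (𝒞 : Set (Set V)) (κ : ℕ)
    (h : IsThinCutSystem G 𝒞 κ) (hns : ¬ ∃ Q : Set V, IsSlice G 𝒞 Q)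
    (E F : Set V) (hE : PreCut G 𝒞 E) (hF : PreCut G 𝒞 F) :
    Nested G 𝒞 E F ↔
      (E ⊆ F ∨ E ⊆ cstar G F ∨ cstar G E ⊆ F ∨ cstar G E ⊆ cstar G F) := by
  obtain ⟨CE, hCE, hbE, hbE'⟩ := precut_pack h.toIsCutSystem hE
  obtain ⟨CF, hCF, hbF, hbF'⟩ := precut_pack h.toIsCutSystem hF
  constructor
  · rintro ⟨A, hnc, hcase⟩
    rcases hcase with ⟨rfl, hl1, hl2⟩ | ⟨rfl, hl1, hl2⟩ | ⟨rfl, hl1, hl2⟩ | ⟨rfl, hl1, hl2⟩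
    · -- A = E ∩ F, links E∩∂F, F∩∂E : conclude E ⊆ F*
      have hPl : E ∩ bdry G F = ∅ := hl1
      have hempty : E ∩ F = ∅ :=
        corner_empty hns hCE hbE hPl hnc
      refine Or.inr (Or.inl ?_)
      intro v hv
      rintro (hvF | hvb)
      · exact Set.eq_empty_iff_forall_notMem.mp hempty v ⟨hv, hvF⟩
      · exact Set.eq_empty_iff_forall_notMem.mp hl1 v ⟨hv, hvb⟩
    · -- A = E ∩ F*, links E∩∂F, F*∩∂E : conclude E ⊆ F
      have hPl : E ∩ bdry G (cstar G F) = ∅ := by rw [hbF']; rw [← hbF]; exact hl1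
      have hempty : E ∩ cstar G F = ∅ := corner_empty hns hCE hbE hPl hnc
      refine Or.inl ?_
      intro v hv
      by_contra hvF
      have hvb : v ∉ bdry G F := fun hb => Set.eq_empty_iff_forall_notMem.mp hl1 v ⟨hv, hb⟩
      have : v ∈ cstar G F := fun hmem => hmem.elim hvF hvb
      exact Set.eq_empty_iff_forall_notMem.mp hempty v ⟨hv, this⟩
    · -- A = E* ∩ F, links E*∩∂F, F∩∂E : conclude E* ⊆ F*
      have hPl : cstar G E ∩ bdry G F = ∅ := hl1
      have hempty : cstar G E ∩ F = ∅ := corner_empty hns hCE hbE' hPl hnc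
      refine Or.inr (Or.inr (Or.inr ?_))
      intro v hv
      rintro (hvF | hvb)
      · exact Set.eq_empty_iff_forall_notMem.mp hempty v ⟨hv, hvF⟩
      · exact Set.eq_empty_iff_forall_notMem.mp hl1 v ⟨hv, hvb⟩
    · -- A = E* ∩ F*, links E*∩∂F, F*∩∂E : conclude E* ⊆ F
      have hPl : cstar G E ∩ bdry G (cstar G F) = ∅ := by rw [hbF', ← hbF]; exact hl1
      have hempty : cstar G E ∩ cstar G F = ∅ := corner_empty hns hCE hbE' hPl hnc
      refine Or.inr (Or.inr (Or.inl ?_))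
      intro v hv
      by_contra hvF
      have hvb : v ∉ bdry G F := fun hb => Set.eq_empty_iff_forall_notMem.mp hl1 v ⟨hv, hb⟩
      have : v ∈ cstar G F := fun hmem => hmem.elim hvF hvb
      exact Set.eq_empty_iff_forall_notMem.mp hempty v ⟨hv, this⟩
  · -- reverse direction
    have hnecut : ∀ {A : Set V}, A = (∅ : Set V) → ¬ ∃ K ∈ 𝒞, K ⊆ A := by
      rintro A rfl ⟨K, hK, hsub⟩
      obtain ⟨x, hx⟩ := h.toIsCutSystem.nonempty K hK
      exact (hsub hx).elim
    rintro (hEF | hEF | hEF | hEF)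
    · -- E ⊆ F : corner E ∩ F* (disjunct 2)
      have hA : E ∩ cstar G F = ∅ := by
        apply Set.eq_empty_iff_forall_notMem.mpr
        rintro v ⟨hvE, hvF⟩
        exact hvF (Or.inl (hEF hvE))
      refine ⟨E ∩ cstar G F, hnecut hA, Or.inr (Or.inl ⟨rfl, ?_, ?_⟩)⟩
      · apply Set.eq_empty_iff_forall_notMem.mpr
        rintro v ⟨hvE, hvb⟩
        exact hvb.1 (hEF hvE)
      · apply Set.eq_empty_iff_forall_notMem.mpr
        rintro v ⟨hvF, hvE, u, huE, hadj⟩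
        exact notMem_cstar (hEF huE) hadj hvF
    · -- E ⊆ F* : corner E ∩ F (disjunct 1)
      have hA : E ∩ F = ∅ := by
        apply Set.eq_empty_iff_forall_notMem.mpr
        rintro v ⟨hvE, hvF⟩
        exact (hEF hvE) (Or.inl hvF)
      refine ⟨E ∩ F, hnecut hA, Or.inl ⟨rfl, ?_, ?_⟩⟩
      · apply Set.eq_empty_iff_forall_notMem.mpr
        rintro v ⟨hvE, hvb⟩
        exact (hEF hvE) (Or.inr hvb)
      · apply Set.eq_empty_iff_forall_notMem.mpr
        rintro v ⟨hvF, hvE, u, huE, hadj⟩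
        exact (hEF huE) (mem_union_bdry_of_adj hvF hadj.symm)
    · -- E* ⊆ F : corner E* ∩ F* (disjunct 4)
      have hA : cstar G E ∩ cstar G F = ∅ := by
        apply Set.eq_empty_iff_forall_notMem.mpr
        rintro v ⟨hvE, hvF⟩
        exact hvF (Or.inl (hEF hvE))
      refine ⟨cstar G E ∩ cstar G F, hnecut hA, Or.inr (Or.inr (Or.inr ⟨rfl, ?_, ?_⟩))⟩
      · apply Set.eq_empty_iff_forall_notMem.mpr
        rintro v ⟨hvE, hvb⟩
        exact hvb.1 (hEF hvE)
      · apply Set.eq_empty_iff_forall_notMem.mpr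
        rintro v ⟨hvF, hvb⟩
        have hvb' : v ∈ bdry G (cstar G E) := by rw [hbE', ← hbE]; exact hvb
        obtain ⟨hvnE, u, huE, hadj⟩ := hvb'
        exact notMem_cstar (hEF huE) hadj hvF
    · -- E* ⊆ F* : corner E* ∩ F (disjunct 3)
      have hA : cstar G E ∩ F = ∅ := by
        apply Set.eq_empty_iff_forall_notMem.mpr
        rintro v ⟨hvE, hvF⟩
        exact (hEF hvE) (Or.inl hvF)
      refine ⟨cstar G E ∩ F, hnecut hA, Or.inr (Or.inr (Or.inl ⟨rfl, ?_, ?_⟩))⟩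
      · apply Set.eq_empty_iff_forall_notMem.mpr
        rintro v ⟨hvE, hvb⟩
        exact (hEF hvE) (Or.inr hvb)
      · apply Set.eq_empty_iff_forall_notMem.mpr
        rintro v ⟨hvF, hvb⟩
        have hvb' : v ∈ bdry G (cstar G E) := by rw [hbE', ← hbE]; exact hvb
        obtain ⟨hvnE, u, huE, hadj⟩ := hvb'
        exact (hEF huE) (mem_union_bdry_of_adj hvF hadj.symm)
end
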